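/- arXiv:1806.02638 — 2 statements merged into one kernel-verified Lean document; each statement's English description precedes it below -/
import Mathlib

section
/- In the Leader Election protocol, every configuration reachable from the initial configuration (in which all N agents are in the initial state l0, counted as leaders) contains at least one agent whose role is leader (or is still in state l0). That is, during any execution of the protocol, at least one leader always exists in the population. -/
namespace LeaderElectionProtocol

/-- A state of an agent in the Leader Election protocol: either the initial state `l0`
(a potential leader), or a role (leader/follower) together with a tuple `(r, e)` of a
random number `r` and a round `e`. -/
inductive St where
  | init : St
  | leader (r e : ℕ) : St
  | follower (r e : ℕ) : St

/-- Tuple `(r, e)` is strictly smaller than `(r', e')`: compared lexicographically,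
round first, then random number. -/
def tlt (a b : ℕ × ℕ) : Prop := a.2 < b.2 ∨ (a.2 = b.2 ∧ a.1 < b.1)

/-- Tuple `(r, e)` is smaller than or equal to `(r', e')`. -/
def tle (a b : ℕ × ℕ) : Prop := tlt a b ∨ a = b

/-- A configuration assigns a state to each of the `N` agents. -/
def Cfg (N : ℕ) := Fin N → St

/-- One step of the Leader Election protocol with `N` agents and random numbers drawn
from `{1, …, m}`: two distinct agents `i ≠ j` interact and apply one of the
(nondeterministic) transition rules. -/
inductive Step (N m : ℕ) : Cfg N → Cfg N → Prop where
  /-- (i) Two `l0` agents meet: one becomes a leader and the other a follower, both with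
  tuple `(r, 1)` for an arbitrary `r ∈ {1, …, m}`. -/
  | both_init (c : Cfg N) (i j : Fin N) (r : ℕ) (hij : i ≠ j)
      (hi : c i = .init) (hj : c j = .init) (hr1 : 1 ≤ r) (hrm : r ≤ m) :
      Step N m c (Function.update (Function.update c i (.leader r 1)) j (.follower r 1))
  /-- (ii) An `l0` agent meeting a leader becomes a follower with the leader's tuple. -/
  | init_meets_leader (c : Cfg N) (i j : Fin N) (r e : ℕ) (hij : i ≠ j)
      (hi : c i = .init) (hj : c j = .leader r e) :
      Step N m c (Function.update c i (.follower r e))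
  /-- (ii) An `l0` agent meeting a follower becomes a follower with that tuple. -/
  | init_meets_follower (c : Cfg N) (i j : Fin N) (r e : ℕ) (hij : i ≠ j)
      (hi : c i = .init) (hj : c j = .follower r e) :
      Step N m c (Function.update c i (.follower r e))
  /-- (iii) Two followers meet: both adopt the larger of their two tuples. -/
  | followers (c : Cfg N) (i j : Fin N) (r₁ e₁ r₂ e₂ : ℕ) (hij : i ≠ j)
      (hi : c i = .follower r₁ e₁) (hj : c j = .follower r₂ e₂)
      (hw : tle (r₂, e₂) (r₁, e₁)) :
      Step N m c (Function.update c j (.follower r₁ e₁))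
  /-- (iv) Two leaders meet: both adopt the (weakly) larger tuple, the agent whose tuple
  did not win becomes a follower, the other remains a leader. -/
  | leaders (c : Cfg N) (i j : Fin N) (r₁ e₁ r₂ e₂ : ℕ) (hij : i ≠ j)
      (hi : c i = .leader r₁ e₁) (hj : c j = .leader r₂ e₂)
      (hw : tle (r₂, e₂) (r₁, e₁)) :
      Step N m c (Function.update c j (.follower r₁ e₁))
  /-- (iv) Variant in which the surviving leader moreover replaces its tuple `(r₁, e₁)`
  by `(r', e₁ + 1)` for an arbitrary `r' ∈ {1, …, m}`. -/
  | leaders_inc (c : Cfg N) (i j : Fin N) (r₁ e₁ r₂ e₂ r' : ℕ) (hij : i ≠ j)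
      (hi : c i = .leader r₁ e₁) (hj : c j = .leader r₂ e₂)
      (hw : tle (r₂, e₂) (r₁, e₁)) (hr1 : 1 ≤ r') (hrm : r' ≤ m) :
      Step N m c
        (Function.update (Function.update c j (.follower r₁ e₁)) i (.leader r' (e₁ + 1)))
  /-- (v) A leader meeting a follower with a strictly larger tuple becomes a follower
  with the follower's tuple. -/
  | leader_loses (c : Cfg N) (i j : Fin N) (r₁ e₁ r₂ e₂ : ℕ) (hij : i ≠ j)
      (hi : c i = .leader r₁ e₁) (hj : c j = .follower r₂ e₂)
      (hw : tlt (r₁, e₁) (r₂, e₂)) :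
      Step N m c (Function.update c i (.follower r₂ e₂))
  /-- (vi) A leader meeting a follower with an equal or smaller tuple remains a leader
  and the follower adopts the leader's tuple. -/
  | leader_wins (c : Cfg N) (i j : Fin N) (r₁ e₁ r₂ e₂ : ℕ) (hij : i ≠ j)
      (hi : c i = .leader r₁ e₁) (hj : c j = .follower r₂ e₂)
      (hw : tle (r₂, e₂) (r₁, e₁)) :
      Step N m c (Function.update c j (.follower r₁ e₁))
  /-- (vi) Variant in which the surviving leader moreover replaces its tuple `(r₁, e₁)`
  by `(r', e₁ + 1)` for an arbitrary `r' ∈ {1, …, m}`. -/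
  | leader_wins_inc (c : Cfg N) (i j : Fin N) (r₁ e₁ r₂ e₂ r' : ℕ) (hij : i ≠ j)
      (hi : c i = .leader r₁ e₁) (hj : c j = .follower r₂ e₂)
      (hw : tle (r₂, e₂) (r₁, e₁)) (hr1 : 1 ≤ r') (hrm : r' ≤ m) :
      Step N m c
        (Function.update (Function.update c j (.follower r₁ e₁)) i (.leader r' (e₁ + 1)))

/-- Reachability: the reflexive–transitive closure of the step relation. -/
def Reachable (N m : ℕ) : Cfg N → Cfg N → Prop := Relation.ReflTransGen (Step N m)

/-- The initial configuration, in which all agents are in the initial state `l0`. -/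
def initCfg (N : ℕ) : Cfg N := fun _ => St.init

end LeaderElectionProtocol

open LeaderElectionProtocol

/-!
Invariant: either every agent is still in `l0`, or some leader holds a tuple that is maximal,
round first, among all tuples present. Such a top leader is never demoted: rule (v) needs a
strictly larger tuple, and in rule (iv) it may be the loser only against a leader with an equal
tuple, who then takes over as top leader. Every tuple written is a copy of a tuple already present,
except the fresh tuple of rule (i) and of a round increment in (iv) or (vi); its holder is a
leader and becomes the top leader whenever that tuple is at least the old maximum.
-/

namespace LeaderElectionProtocol

/-- `tle` and `tlt` are the lexicographic order of `ℕ ×ₗ ℕ` after swapping the components. -/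
def rank (t : ℕ × ℕ) : ℕ ×ₗ ℕ := toLex (t.2, t.1)

theorem tle_iff_rank_le {a b : ℕ × ℕ} : tle a b ↔ rank a ≤ rank b := by
  simp only [tle, tlt, rank, Prod.Lex.toLex_le_toLex, Prod.ext_iff]
  omega

theorem tlt_iff_rank_lt {a b : ℕ × ℕ} : tlt a b ↔ rank a < rank b := by
  simp only [tlt, rank, Prod.Lex.toLex_lt_toLex]

theorem rank_lt_rank_succ_round (r e r' : ℕ) : rank (r, e) < rank (r', e + 1) := by
  simp [rank, Prod.Lex.toLex_lt_toLex]

def St.tuple : St → Option (ℕ × ℕ)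
  | .init => none
  | .leader r e => some (r, e)
  | .follower r e => some (r, e)

@[simp] theorem St.tuple_init : St.init.tuple = none := rfl
@[simp] theorem St.tuple_leader (r e : ℕ) : (St.leader r e).tuple = some (r, e) := rfl
@[simp] theorem St.tuple_follower (r e : ℕ) : (St.follower r e).tuple = some (r, e) := rfl

/- Configurations are taken as plain functions `Fin N → St` rather than `Cfg N`: `Cfg` is not
reducible, and `Function.update` lemmas do not fire on it. -/

variable {N : ℕ}

def Dominates (c : Fin N → St) (t : ℕ × ℕ) : Prop :=
  ∀ k, ∀ u ∈ (c k).tuple, rank u ≤ rank t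

def IsTopLeader (c : Fin N → St) (i : Fin N) (t : ℕ × ℕ) : Prop :=
  c i = .leader t.1 t.2 ∧ Dominates c t

def LeaderInv (c : Fin N → St) : Prop :=
  (∀ k, c k = .init) ∨ ∃ i t, IsTopLeader c i t

theorem Dominates.mono {c : Fin N → St} {t t' : ℕ × ℕ} (h : Dominates c t)
    (htt' : rank t ≤ rank t') : Dominates c t' :=
  fun k u hu => (h k u hu).trans htt'

theorem Dominates.update {c : Fin N → St} {t : ℕ × ℕ} (h : Dominates c t) (j : Fin N) {s : St}
    (hs : ∀ u ∈ s.tuple, rank u ≤ rank t) : Dominates (Function.update c j s) t := by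
  intro k u hu
  rcases eq_or_ne k j with rfl | hkj
  · exact hs u (by simpa [Function.update_self] using hu)
  · exact h k u (by simpa [Function.update_of_ne hkj] using hu)

theorem dominates_of_forall_init {c : Fin N → St} (h : ∀ k, c k = .init) (t : ℕ × ℕ) :
    Dominates c t :=
  fun k u hu => by simp [h k] at hu

theorem IsTopLeader.update {c : Fin N → St} {i j : Fin N} {t : ℕ × ℕ} (h : IsTopLeader c i t)
    (hij : i ≠ j) {s : St} (hs : ∀ u ∈ s.tuple, rank u ≤ rank t) :
    IsTopLeader (Function.update c j s) i t :=
  ⟨by rw [Function.update_of_ne hij, h.1], h.2.update j hs⟩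

theorem IsTopLeader.rank_le {c : Fin N → St} {i k : Fin N} {t u : ℕ × ℕ} (h : IsTopLeader c i t)
    (hu : (c k).tuple = some u) : rank u ≤ rank t :=
  h.2 k u hu

theorem IsTopLeader.eq_of_leader {c : Fin N → St} {i : Fin N} {t : ℕ × ℕ} {r e : ℕ}
    (h : IsTopLeader c i t) (hi : c i = .leader r e) : t = (r, e) := by
  obtain ⟨hr, he⟩ := St.leader.inj (h.1.symm.trans hi)
  exact Prod.ext hr he

theorem IsTopLeader.ne {c : Fin N → St} {i j : Fin N} {t : ℕ × ℕ} (h : IsTopLeader c i t)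
    (hj : ∀ r e, c j ≠ .leader r e) : i ≠ j := by
  rintro rfl
  exact hj _ _ h.1

theorem LeaderInv.exists_isTopLeader {c : Fin N → St} (h : LeaderInv c) {k : Fin N}
    {u : ℕ × ℕ} (hk : (c k).tuple = some u) : ∃ i t, IsTopLeader c i t :=
  h.resolve_left fun hinit => by simp [hinit k] at hk

theorem IsTopLeader.leaderInv_update_follower {c : Fin N → St} {i j k : Fin N} {t : ℕ × ℕ}
    {r e : ℕ} (h : IsTopLeader c i t) (hij : i ≠ j) (hk : (c k).tuple = some (r, e)) :
    LeaderInv (Function.update c j (.follower r e)) :=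
  Or.inr ⟨i, t, h.update hij fun u hu => by
    obtain rfl : (r, e) = u := by simpa using hu
    exact h.rank_le hk⟩

theorem LeaderInv.update_follower_leader {c : Fin N → St} (h : LeaderInv c) {i j : Fin N}
    {r₀ e₀ r e : ℕ} (hle : rank (r₀, e₀) ≤ rank (r, e))
    (hold : ∀ l u, IsTopLeader c l u → (l = i ∨ l = j) → rank u ≤ rank (r, e)) :
    LeaderInv (Function.update (Function.update c j (.follower r₀ e₀)) i (.leader r e)) := by
  have new_top (hdom : Dominates c (r, e)) :
      LeaderInv (Function.update (Function.update c j (.follower r₀ e₀)) i (.leader r e)) := by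
    refine Or.inr ⟨i, (r, e), by simp, (hdom.update j ?_).update i ?_⟩ <;> simp [hle]
  rcases h with hinit | ⟨l, u, hl⟩
  · exact new_top (dominates_of_forall_init hinit _)
  rcases le_total (rank u) (rank (r, e)) with hu | hu
  · exact new_top (hl.2.mono hu)
  by_cases hlij : l = i ∨ l = j
  · exact new_top (hl.2.mono (hold l u hl hlij))
  push Not at hlij
  refine Or.inr ⟨l, u, (hl.update hlij.2 ?_).update hlij.1 ?_⟩ <;> simp [hu, hle.trans hu]

theorem LeaderInv.step {m : ℕ} {c c' : Fin N → St} (h : LeaderInv c)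
    (hstep : Step N m c c') : LeaderInv c' := by
  cases hstep with
  | both_init i j r hij hi hj =>
    rw [Function.update_comm hij]
    refine h.update_follower_leader le_rfl fun l u hl hlij => absurd hlij ?_
    rintro (rfl | rfl)
    · exact hl.ne (by simp [hi]) rfl
    · exact hl.ne (by simp [hj]) rfl
  | init_meets_leader i j r e _ hi hj =>
    obtain ⟨l, u, hl⟩ := h.exists_isTopLeader (congrArg St.tuple hj)
    exact hl.leaderInv_update_follower (hl.ne (by simp [hi])) (congrArg St.tuple hj)
  | init_meets_follower i j r e _ hi hj =>
    obtain ⟨l, u, hl⟩ := h.exists_isTopLeader (congrArg St.tuple hj)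
    exact hl.leaderInv_update_follower (hl.ne (by simp [hi])) (congrArg St.tuple hj)
  | followers i j r₁ e₁ r₂ e₂ _ hi hj =>
    obtain ⟨l, u, hl⟩ := h.exists_isTopLeader (congrArg St.tuple hi)
    exact hl.leaderInv_update_follower (hl.ne (by simp [hj])) (congrArg St.tuple hi)
  | leaders i j r₁ e₁ r₂ e₂ hij hi hj hw =>
    obtain ⟨l, u, hl⟩ := h.exists_isTopLeader (congrArg St.tuple hi)
    by_cases hlj : l = j
    · subst hlj
      have hi_top : IsTopLeader c i (r₁, e₁) :=
        ⟨hi, hl.2.mono (hl.eq_of_leader hj ▸ tle_iff_rank_le.mp hw)⟩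
      exact hi_top.leaderInv_update_follower hij (congrArg St.tuple hi)
    · exact hl.leaderInv_update_follower hlj (congrArg St.tuple hi)
  | leaders_inc i j r₁ e₁ r₂ e₂ r' _ hi hj hw =>
    have hfresh := (rank_lt_rank_succ_round r₁ e₁ r').le
    refine h.update_follower_leader hfresh fun l u hl hlij => ?_
    rcases hlij with rfl | rfl
    · exact hl.eq_of_leader hi ▸ hfresh
    · exact hl.eq_of_leader hj ▸ (tle_iff_rank_le.mp hw).trans hfresh
  | leader_loses i j r₁ e₁ r₂ e₂ _ hi hj hw =>
    obtain ⟨l, u, hl⟩ := h.exists_isTopLeader (congrArg St.tuple hi)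
    have hli : l ≠ i := by
      rintro rfl
      have hj_le := hl.rank_le (congrArg St.tuple hj)
      rw [hl.eq_of_leader hi] at hj_le
      exact hj_le.not_gt (tlt_iff_rank_lt.mp hw)
    exact hl.leaderInv_update_follower hli (congrArg St.tuple hj)
  | leader_wins i j r₁ e₁ r₂ e₂ _ hi hj =>
    obtain ⟨l, u, hl⟩ := h.exists_isTopLeader (congrArg St.tuple hi)
    exact hl.leaderInv_update_follower (hl.ne (by simp [hj])) (congrArg St.tuple hi)
  | leader_wins_inc i j r₁ e₁ r₂ e₂ r' _ hi hj =>
    have hfresh := (rank_lt_rank_succ_round r₁ e₁ r').le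
    refine h.update_follower_leader hfresh fun l u hl hlij => ?_
    rcases hlij with rfl | rfl
    · exact hl.eq_of_leader hi ▸ hfresh
    · exact absurd rfl (hl.ne (by simp [hj]))

theorem LeaderInv.of_reachable {m : ℕ} {c : Fin N → St} (h : Reachable N m (initCfg N) c) :
    LeaderInv c := by
  induction h with
  | refl => exact Or.inl fun _ => rfl
  | tail _ hstep ih => exact ih.step hstep

end LeaderElectionProtocol

/-- in the Leader Election protocol, every configuration reachable from
the initial configuration (all `N` agents in the initial state `l0`, counted as leaders)
contains at least one agent whose role is leader or which is still in state `l0`: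
at least one leader always exists in the population. -/
theorem leader_always_exists (N m : ℕ) (hN : 2 ≤ N) (c : Cfg N)
    (hc : Reachable N m (initCfg N) c) :
    ∃ a : Fin N, c a = St.init ∨ ∃ r e : ℕ, c a = St.leader r e := by
  rcases LeaderInv.of_reachable hc with hinit | ⟨i, t, hi, -⟩
  · exact ⟨⟨0, by omega⟩, Or.inl (hinit _)⟩
  · exact ⟨i, Or.inr ⟨t.1, t.2, hi⟩⟩
end

section
/- In the Leader Election protocol, in every configuration reachable from the all-l0 initial configuration in which at least one agent holds a tuple, the lexicographic maximum tuple present among all agents is held by at least one agent whose role is leader. -/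
/-!
The maximum tuple present can only be created by a leader: rule (i) and the round increments of
rules (iv) and (vi) create tuples, always at a surviving leader, while every other rule only
copies tuples that are already present. A leader holding the maximum tuple loses its role only
in rule (iv), against a leader with an equal tuple, which survives; it cannot lose in rule (v),
as no follower holds a strictly larger tuple. Hence "some leader holds the maximum tuple" is an
invariant once a tuple exists.
-/

namespace LeaderElectionProtocol

lemma tle_iff {a b : ℕ × ℕ} : tle a b ↔ a.2 < b.2 ∨ (a.2 = b.2 ∧ a.1 ≤ b.1) := by
  obtain ⟨a₁, a₂⟩ := a
  obtain ⟨b₁, b₂⟩ := b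
  simp only [tle, tlt, Prod.mk.injEq]
  omega

lemma tle_refl (a : ℕ × ℕ) : tle a a := Or.inr rfl

lemma tle_trans {a b c : ℕ × ℕ} (hab : tle a b) (hbc : tle b c) : tle a c := by
  rw [tle_iff] at *
  omega

lemma tle_total (a b : ℕ × ℕ) : tle a b ∨ tle b a := by
  rw [tle_iff, tle_iff]
  omega

lemma not_tle_of_tlt {a b : ℕ × ℕ} (h : tlt a b) : ¬ tle b a := by
  rw [tle_iff]
  unfold tlt at h
  omega

lemma tlt_succ_round (r e r' : ℕ) : tlt (r, e) (r', e + 1) := Or.inl e.lt_succ_self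

def St.BoundedBy (s : St) (t : ℕ × ℕ) : Prop :=
  ∀ r e : ℕ, (s = .leader r e ∨ s = .follower r e) → tle (r, e) t

lemma St.boundedBy_leader {r e : ℕ} {t : ℕ × ℕ} (h : tle (r, e) t) :
    (St.leader r e).BoundedBy t := by
  rintro r' e' (h' | h') <;> cases h'
  exact h

lemma St.boundedBy_follower {r e : ℕ} {t : ℕ × ℕ} (h : tle (r, e) t) :
    (St.follower r e).BoundedBy t := by
  rintro r' e' (h' | h') <;> cases h'
  exact h

namespace Cfg

variable {N : ℕ}

def HasTuple (c : Cfg N) : Prop :=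
  ∃ a : Fin N, ∃ r e : ℕ, c a = St.leader r e ∨ c a = St.follower r e

def BoundedBy (c : Cfg N) (t : ℕ × ℕ) : Prop := ∀ b, (c b).BoundedBy t

lemma boundedBy_of_not_hasTuple {c : Cfg N} (hc : ¬ c.HasTuple) (t : ℕ × ℕ) : c.BoundedBy t :=
  fun b r e hb => absurd ⟨b, r, e, hb⟩ hc

lemma BoundedBy.mono {c : Cfg N} {t u : ℕ × ℕ} (hc : c.BoundedBy t) (htu : tle t u) :
    c.BoundedBy u :=
  fun b r e hb => tle_trans (hc b r e hb) htu

lemma BoundedBy.update {c : Cfg N} {t : ℕ × ℕ} (hc : c.BoundedBy t) (i : Fin N) {s : St}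
    (hs : s.BoundedBy t) : BoundedBy (Function.update c i s) t := by
  intro b
  rcases eq_or_ne b i with rfl | hb
  · exact (congrArg (St.BoundedBy · t) (Function.update_self b s c)).mpr hs
  · exact (congrArg (St.BoundedBy · t) (Function.update_of_ne hb s c)).mpr (hc b)

def IsMaxLeader (c : Cfg N) (a : Fin N) (t : ℕ × ℕ) : Prop :=
  c a = .leader t.1 t.2 ∧ c.BoundedBy t

lemma isMaxLeader_update_self {c : Cfg N} {t : ℕ × ℕ} (hc : c.BoundedBy t) (i : Fin N) :
    IsMaxLeader (Function.update c i (.leader t.1 t.2)) i t :=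
  ⟨Function.update_self .., hc.update i (St.boundedBy_leader (tle_refl t))⟩

namespace IsMaxLeader

variable {c : Cfg N} {a : Fin N} {t : ℕ × ℕ}

lemma update (h : IsMaxLeader c a t) {i : Fin N} (hai : a ≠ i) {s : St} (hs : s.BoundedBy t) :
    IsMaxLeader (Function.update c i s) a t :=
  ⟨(Function.update_of_ne hai ..).trans h.1, h.2.update i hs⟩

lemma ne (h : IsMaxLeader c a t) {i : Fin N} (hi : ∀ r e, c i ≠ .leader r e) : a ≠ i := by
  rintro rfl
  exact hi _ _ h.1

lemma tle_of_boundedBy (h : IsMaxLeader c a t) {u : ℕ × ℕ} (hu : (c a).BoundedBy u) : tle t u :=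
  hu t.1 t.2 (Or.inl h.1)

lemma tle_of_apply_eq_follower (h : IsMaxLeader c a t) {b : Fin N} {r e : ℕ}
    (hb : c b = .follower r e) : tle (r, e) t :=
  h.2 b r e (Or.inr hb)

lemma tle_of_apply_eq_leader (h : IsMaxLeader c a t) {b : Fin N} {r e : ℕ}
    (hb : c b = .leader r e) : tle (r, e) t :=
  h.2 b r e (Or.inl hb)

end IsMaxLeader

end Cfg

open Cfg

variable {N m : ℕ}

/-- The configuration after rule (iv) or (vi) with a round increment. -/
lemma exists_isMaxLeader_of_increment {c : Cfg N} {a i j : Fin N} {t : ℕ × ℕ}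
    (h : IsMaxLeader c a t) {r e : ℕ} (hi : c i = .leader r e)
    (hj : (c j).BoundedBy (r, e)) (r' : ℕ) :
    ∃ a t, IsMaxLeader (Function.update (Function.update c j (.follower r e)) i
      (.leader r' (e + 1))) a t := by
  have hfollower : (St.follower r e).BoundedBy t :=
    St.boundedBy_follower (h.tle_of_apply_eq_leader hi)
  rcases tle_total t (r', e + 1) with hnew | hold
  · exact ⟨i, (r', e + 1), isMaxLeader_update_self ((h.2.mono hnew).update j
      (St.boundedBy_follower (tle_trans (h.tle_of_apply_eq_leader hi) hnew))) i⟩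
  · -- the old maximum beats the new tuple `(r', e + 1)`, so it was not held by `i` or `j`
    have hold_ne : ∀ b, (c b).BoundedBy (r, e) → a ≠ b := by
      rintro b hb rfl
      exact not_tle_of_tlt (tlt_succ_round r e r') (tle_trans hold (h.tle_of_boundedBy hb))
    refine ⟨a, t, (h.update (hold_ne j hj) hfollower).update (hold_ne i ?_) ?_⟩
    · rw [hi]
      exact St.boundedBy_leader (tle_refl _)
    · exact St.boundedBy_leader hold

/-- The configuration after rule (i). -/
lemma exists_isMaxLeader_of_both_init {c : Cfg N} {i j : Fin N} (hij : i ≠ j)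
    (hi : c i = .init) (hj : c j = .init) (r : ℕ) (ih : c.HasTuple → ∃ a t, IsMaxLeader c a t) :
    ∃ a t, IsMaxLeader (Function.update (Function.update c i (.leader r 1)) j
      (.follower r 1)) a t := by
  by_cases hold : ∃ a t, IsMaxLeader c a t ∧ tle (r, 1) t
  · obtain ⟨a, t, h, hle⟩ := hold
    exact ⟨a, t, (h.update (h.ne (by simp [hi])) (St.boundedBy_leader hle)).update
      (h.ne (by simp [hj])) (St.boundedBy_follower hle)⟩
  · have hbound : c.BoundedBy (r, 1) := by
      by_cases hc : c.HasTuple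
      · obtain ⟨a, t, h⟩ := ih hc
        exact h.2.mono ((tle_total _ _).resolve_left fun hle => hold ⟨a, t, h, hle⟩)
      · exact boundedBy_of_not_hasTuple hc _
    exact ⟨i, (r, 1), (isMaxLeader_update_self hbound i).update hij
      (St.boundedBy_follower (tle_refl _))⟩

/-- The configuration after rule (iv) without a round increment. -/
lemma exists_isMaxLeader_of_leaders {c : Cfg N} {a i j : Fin N} {t : ℕ × ℕ}
    (h : IsMaxLeader c a t) (hij : i ≠ j) {r₁ e₁ r₂ e₂ : ℕ} (hi : c i = .leader r₁ e₁)
    (hj : c j = .leader r₂ e₂) (hw : tle (r₂, e₂) (r₁, e₁)) :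
    ∃ a t, IsMaxLeader (Function.update c j (.follower r₁ e₁)) a t := by
  by_cases haj : a = j
  · -- the loser `j` held the maximum, so the winner `i` holds it too
    subst haj
    have hbound : c.BoundedBy (r₁, e₁) :=
      h.2.mono (h.tle_of_boundedBy (by rw [hj]; exact St.boundedBy_leader hw))
    exact ⟨i, (r₁, e₁), (show IsMaxLeader c i (r₁, e₁) from ⟨hi, hbound⟩).update hij
      (St.boundedBy_follower (tle_refl _))⟩
  · exact ⟨a, t, h.update haj (St.boundedBy_follower (h.tle_of_apply_eq_leader hi))⟩

lemma Step.exists_isMaxLeader {c c' : Cfg N} (hs : Step N m c c')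
    (ih : c.HasTuple → ∃ a t, IsMaxLeader c a t) : ∃ a t, IsMaxLeader c' a t := by
  cases hs with
  | both_init i j r hij hi hj => exact exists_isMaxLeader_of_both_init hij hi hj r ih
  | init_meets_leader i j r e _ hi hj =>
    obtain ⟨a, t, h⟩ := ih ⟨j, r, e, Or.inl hj⟩
    exact ⟨a, t, h.update (h.ne (by simp [hi]))
      (St.boundedBy_follower (h.tle_of_apply_eq_leader hj))⟩
  | init_meets_follower i j r e _ hi hj =>
    obtain ⟨a, t, h⟩ := ih ⟨j, r, e, Or.inr hj⟩
    exact ⟨a, t, h.update (h.ne (by simp [hi]))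
      (St.boundedBy_follower (h.tle_of_apply_eq_follower hj))⟩
  | followers i j r₁ e₁ r₂ e₂ _ hi hj _ =>
    obtain ⟨a, t, h⟩ := ih ⟨i, r₁, e₁, Or.inr hi⟩
    exact ⟨a, t, h.update (h.ne (by simp [hj]))
      (St.boundedBy_follower (h.tle_of_apply_eq_follower hi))⟩
  | leaders i j r₁ e₁ r₂ e₂ hij hi hj hw =>
    obtain ⟨a, t, h⟩ := ih ⟨i, r₁, e₁, Or.inl hi⟩
    exact exists_isMaxLeader_of_leaders h hij hi hj hw
  | leaders_inc i j r₁ e₁ r₂ e₂ r' _ hi hj hw =>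
    obtain ⟨a, t, h⟩ := ih ⟨i, r₁, e₁, Or.inl hi⟩
    exact exists_isMaxLeader_of_increment h hi (by rw [hj]; exact St.boundedBy_leader hw) r'
  | leader_loses i j r₁ e₁ r₂ e₂ _ hi hj hw =>
    obtain ⟨a, t, h⟩ := ih ⟨i, r₁, e₁, Or.inl hi⟩
    have hai : a ≠ i := by
      rintro rfl
      exact not_tle_of_tlt hw (tle_trans (h.tle_of_apply_eq_follower hj)
        (h.tle_of_boundedBy (by rw [hi]; exact St.boundedBy_leader (tle_refl _))))
    exact ⟨a, t, h.update hai (St.boundedBy_follower (h.tle_of_apply_eq_follower hj))⟩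
  | leader_wins i j r₁ e₁ r₂ e₂ _ hi hj _ =>
    obtain ⟨a, t, h⟩ := ih ⟨i, r₁, e₁, Or.inl hi⟩
    exact ⟨a, t, h.update (h.ne (by simp [hj]))
      (St.boundedBy_follower (h.tle_of_apply_eq_leader hi))⟩
  | leader_wins_inc i j r₁ e₁ r₂ e₂ r' _ hi hj hw =>
    obtain ⟨a, t, h⟩ := ih ⟨i, r₁, e₁, Or.inl hi⟩
    exact exists_isMaxLeader_of_increment h hi (by rw [hj]; exact St.boundedBy_follower hw) r'

lemma Reachable.exists_isMaxLeader {c : Cfg N} (hc : Reachable N m (initCfg N) c)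
    (hx : c.HasTuple) : ∃ a t, IsMaxLeader c a t := by
  induction hc with
  | refl => exact absurd hx (by simp [HasTuple, initCfg])
  | tail _ hs ih => exact hs.exists_isMaxLeader ih

end LeaderElectionProtocol

open LeaderElectionProtocol

theorem max_tuple_held_by_leader_general (N m : ℕ) (c : Cfg N)
    (hc : Reachable N m (initCfg N) c)
    (hx : ∃ a : Fin N, ∃ r e : ℕ, c a = St.leader r e ∨ c a = St.follower r e) :
    ∃ a : Fin N, ∃ r e : ℕ, c a = St.leader r e ∧
      ∀ b : Fin N, ∀ r' e' : ℕ,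
        (c b = St.leader r' e' ∨ c b = St.follower r' e') → tle (r', e') (r, e) := by
  obtain ⟨a, t, hleader, hbound⟩ := Reachable.exists_isMaxLeader hc hx
  exact ⟨a, t.1, t.2, hleader, hbound⟩

/-- in the Leader Election protocol, in every configuration reachable from
the all-`l0` initial configuration in which at least one agent holds a tuple, the
lexicographically maximum tuple present among all agents is held by at least one agent
whose role is leader. -/
theorem max_tuple_held_by_leader (N m : ℕ) (hN : 2 ≤ N) (c : Cfg N)
    (hc : Reachable N m (initCfg N) c)
    (hx : ∃ a : Fin N, ∃ r e : ℕ, c a = St.leader r e ∨ c a = St.follower r e) :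
    ∃ a : Fin N, ∃ r e : ℕ, c a = St.leader r e ∧
      ∀ b : Fin N, ∀ r' e' : ℕ,
        (c b = St.leader r' e' ∨ c b = St.follower r' e') → tle (r', e') (r, e) :=
  max_tuple_held_by_leader_general N m c hc hx
end
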